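/- arXiv:1108.5522 — 2 statements merged into one kernel-verified Lean document; each statement's English description precedes it below -/
import Mathlib

section
/- Given A ∈ ℂ^{m×n}, B ∈ ℂ^{p×q}, D ∈ ℂ^{m×q}, the set of least squares solutions of AXB = D is exactly {A⁺DB⁺ + (I_n − A⁺A)V + W(I_p − BB⁺) : V, W ∈ ℂ^{n×p}}, and X_LS = A⁺DB⁺ is the least squares solution of minimum Frobenius norm. -/
open Matrix

/-- The four Penrose equations defining the Moore–Penrose inverse of a complex matrix. -/
def IsMoorePenrose {m n : ℕ} (A : Matrix (Fin m) (Fin n) ℂ)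
    (X : Matrix (Fin n) (Fin m) ℂ) : Prop :=
  (A * X)ᴴ = A * X ∧ (X * A)ᴴ = X * A ∧ A * X * A = A ∧ X * A * X = X

/-- The principal minor of a square matrix `M` determined by the index set `β`. -/
noncomputable def pminor {n : ℕ} (M : Matrix (Fin n) (Fin n) ℂ) (β : Finset (Fin n)) : ℂ :=
  (M.submatrix (Subtype.val : β → Fin n) (Subtype.val : β → Fin n)).det

/-- The Frobenius norm of a complex matrix. -/
noncomputable def frob {m n : ℕ} (M : Matrix (Fin m) (Fin n) ℂ) : ℝ :=
  Real.sqrt (∑ i, ∑ j, ‖M i j‖ ^ 2)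

/-! Write `X₀ = A⁺DB⁺`. Since `AA⁺` and `B⁺B` are Hermitian idempotents, the residual splits
orthogonally as `AXB - D = A(X - X₀)B + (AX₀B - D)` with `AA⁺(AX₀B - D)B⁺B = 0`, so by Pythagoras
`X` is a least squares solution iff `A(X - X₀)B = 0`, and this kernel is exactly
`{(I - A⁺A)V + W(I - BB⁺)}`. Likewise `A⁺A` and `BB⁺` fix `X₀` and kill every `Z` with `AZB = 0`,
so `‖X₀ + Z‖² = ‖X₀‖² + ‖Z‖²`. -/

section GeneralizedInverse

variable {R : Type*} {k l o r : Type*} [Fintype l] [Fintype o]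

theorem trace_conjTranspose_mul_eq_zero_of_sandwich [Fintype k] [CommRing R] [StarRing R]
    {P : Matrix k k R} {Q : Matrix l l R} (hP : Pᴴ = P) (hQ : Qᴴ = Q) {M N : Matrix k l R}
    (hM : P * M * Q = M) (hN : P * N * Q = 0) : trace (Mᴴ * N) = 0 :=
  calc trace (Mᴴ * N) = trace ((P * M * Q)ᴴ * N) := by rw [hM]
    _ = trace (Mᴴ * (P * N * Q)) := by
        rw [conjTranspose_mul, conjTranspose_mul, hP, hQ, Matrix.mul_assoc, trace_mul_comm]
        simp only [Matrix.mul_assoc]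
    _ = 0 := by rw [hN, Matrix.mul_zero, trace_zero]

theorem mul_mul_eq_zero_iff_of_generalized_inverse [Fintype k] [Fintype r] [Ring R]
    [DecidableEq l] [DecidableEq o] {A : Matrix k l R} {Ag : Matrix l k R}
    {B : Matrix o r R} {Bg : Matrix r o R} (hA : A * Ag * A = A) (hB : B * Bg * B = B)
    {Z : Matrix l o R} :
    A * Z * B = 0 ↔ ∃ V W : Matrix l o R, Z = (1 - Ag * A) * V + W * (1 - B * Bg) := by
  constructor
  · intro hZ
    refine ⟨Z, Ag * A * Z, ?_⟩
    have h : Ag * A * Z * (B * Bg) = Ag * (A * Z * B) * Bg := by simp only [Matrix.mul_assoc]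
    rw [Matrix.sub_mul, Matrix.mul_sub, Matrix.one_mul, Matrix.mul_one, h, hZ, Matrix.mul_zero,
      Matrix.zero_mul]
    abel
  · rintro ⟨V, W, rfl⟩
    have hA0 : A * (1 - Ag * A) = 0 := by
      rw [Matrix.mul_sub, Matrix.mul_one, ← Matrix.mul_assoc, hA, sub_self]
    have hB0 : (1 - B * Bg) * B = 0 := by
      rw [Matrix.sub_mul, Matrix.one_mul, hB, sub_self]
    rw [Matrix.mul_add, Matrix.add_mul, ← Matrix.mul_assoc A, hA0, Matrix.zero_mul,
      Matrix.zero_mul, Matrix.mul_assoc, Matrix.mul_assoc W, hB0, Matrix.mul_zero,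
      Matrix.mul_zero, add_zero]

end GeneralizedInverse

section Frobenius

variable {m n k l : ℕ}

attribute [local instance] Matrix.frobeniusNormedAddCommGroup

theorem frob_eq_norm (M : Matrix (Fin m) (Fin n) ℂ) : frob M = ‖M‖ := by
  rw [frob, frobenius_norm_def, Real.sqrt_eq_rpow]
  simp

theorem frob_nonneg (M : Matrix (Fin m) (Fin n) ℂ) : 0 ≤ frob M :=
  Real.sqrt_nonneg _

theorem frob_eq_zero_iff {M : Matrix (Fin m) (Fin n) ℂ} : frob M = 0 ↔ M = 0 := by
  rw [frob_eq_norm, norm_eq_zero]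

theorem frob_le_frob_iff {M : Matrix (Fin m) (Fin n) ℂ} {N : Matrix (Fin k) (Fin l) ℂ} :
    frob M ≤ frob N ↔ frob M ^ 2 ≤ frob N ^ 2 :=
  (sq_le_sq₀ (frob_nonneg M) (frob_nonneg N)).symm

theorem frob_sq (M : Matrix (Fin m) (Fin n) ℂ) : frob M ^ 2 = (trace (Mᴴ * M)).re := by
  rw [frob, Real.sq_sqrt (by positivity)]
  simp only [Complex.sq_norm, Complex.normSq_apply, trace, diag_apply, mul_apply,
    conjTranspose_apply, RCLike.star_def, Complex.re_sum, Complex.mul_re, Complex.conj_re,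
    Complex.conj_im, neg_mul, sub_neg_eq_add]
  rw [Finset.sum_comm]

theorem frob_add_sq (M N : Matrix (Fin m) (Fin n) ℂ) :
    frob (M + N) ^ 2 = frob M ^ 2 + frob N ^ 2 + 2 * (trace (Mᴴ * N)).re := by
  have h : trace (Nᴴ * M) = star (trace (Mᴴ * N)) := by
    rw [← trace_conjTranspose, conjTranspose_mul, conjTranspose_conjTranspose]
  simp only [frob_sq, conjTranspose_add, Matrix.add_mul, Matrix.mul_add, trace_add,
    Complex.add_re, h, Complex.star_def, Complex.conj_re]
  ring

theorem frob_add_sq_of_trace_eq_zero {M N : Matrix (Fin m) (Fin n) ℂ}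
    (h : trace (Mᴴ * N) = 0) : frob (M + N) ^ 2 = frob M ^ 2 + frob N ^ 2 := by
  rw [frob_add_sq, h, Complex.zero_re, mul_zero, add_zero]

end Frobenius

section LeastSquares

variable {m n p q : ℕ} {A : Matrix (Fin m) (Fin n) ℂ} {B : Matrix (Fin p) (Fin q) ℂ}
  {Ap : Matrix (Fin n) (Fin m) ℂ} {Bp : Matrix (Fin q) (Fin p) ℂ}

def IsLeastSquares (A : Matrix (Fin m) (Fin n) ℂ) (B : Matrix (Fin p) (Fin q) ℂ)
    (D : Matrix (Fin m) (Fin q) ℂ) (X : Matrix (Fin n) (Fin p) ℂ) : Prop :=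
  ∀ Y : Matrix (Fin n) (Fin p) ℂ, frob (A * X * B - D) ≤ frob (A * Y * B - D)

theorem frob_residual_sq (hAp : IsMoorePenrose A Ap) (hBp : IsMoorePenrose B Bp)
    (D : Matrix (Fin m) (Fin q) ℂ) (X : Matrix (Fin n) (Fin p) ℂ) :
    frob (A * X * B - D) ^ 2
      = frob (A * (X - Ap * D * Bp) * B) ^ 2 + frob (A * (Ap * D * Bp) * B - D) ^ 2 := by
  obtain ⟨hA1, -, hA3, -⟩ := hAp
  obtain ⟨-, hB2, hB3, -⟩ := hBp
  have hfix : ∀ Z : Matrix (Fin n) (Fin p) ℂ, A * Ap * (A * Z * B) * (Bp * B) = A * Z * B := by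
    intro Z
    calc A * Ap * (A * Z * B) * (Bp * B) = A * Ap * A * Z * (B * Bp * B) := by
          simp only [Matrix.mul_assoc]
      _ = A * Z * B := by rw [hA3, hB3]
  have hDX : A * Ap * D * (Bp * B) = A * (Ap * D * Bp) * B := by simp only [Matrix.mul_assoc]
  have hsplit : A * X * B - D = A * (X - Ap * D * Bp) * B + (A * (Ap * D * Bp) * B - D) := by
    rw [Matrix.mul_sub, Matrix.sub_mul, sub_add_sub_cancel]
  have horth : A * Ap * (A * (Ap * D * Bp) * B - D) * (Bp * B) = 0 := by
    rw [Matrix.mul_sub, Matrix.sub_mul, hfix, hDX, sub_self]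
  rw [hsplit, frob_add_sq_of_trace_eq_zero
    (trace_conjTranspose_mul_eq_zero_of_sandwich hA1 hB2 (hfix _) horth)]

theorem isLeastSquares_iff (hAp : IsMoorePenrose A Ap) (hBp : IsMoorePenrose B Bp)
    {D : Matrix (Fin m) (Fin q) ℂ} {X : Matrix (Fin n) (Fin p) ℂ} :
    IsLeastSquares A B D X ↔ A * (X - Ap * D * Bp) * B = 0 := by
  have hres := frob_residual_sq hAp hBp D
  constructor
  · intro h
    have h₀ := frob_le_frob_iff.mp (h (Ap * D * Bp))
    rw [hres X, hres (Ap * D * Bp), sub_self, Matrix.mul_zero, Matrix.zero_mul,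
      frob_eq_zero_iff.mpr rfl] at h₀
    rw [← frob_eq_zero_iff]
    nlinarith [frob_nonneg (A * (X - Ap * D * Bp) * B)]
  · intro h Y
    rw [frob_le_frob_iff, hres X, hres Y, h, frob_eq_zero_iff.mpr rfl]
    nlinarith [frob_nonneg (A * (Y - Ap * D * Bp) * B)]

theorem frob_le_frob_add_of_mul_mul_eq_zero (hAp : IsMoorePenrose A Ap)
    (hBp : IsMoorePenrose B Bp) (D : Matrix (Fin m) (Fin q) ℂ) {Z : Matrix (Fin n) (Fin p) ℂ}
    (hZ : A * Z * B = 0) : frob (Ap * D * Bp) ≤ frob (Ap * D * Bp + Z) := by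
  obtain ⟨-, hA2, -, hA4⟩ := hAp
  obtain ⟨hB1, -, -, hB4⟩ := hBp
  have hfix : Ap * A * (Ap * D * Bp) * (B * Bp) = Ap * D * Bp :=
    calc Ap * A * (Ap * D * Bp) * (B * Bp) = Ap * A * Ap * D * (Bp * B * Bp) := by
          simp only [Matrix.mul_assoc]
      _ = Ap * D * Bp := by rw [hA4, hB4]
  have hkill : Ap * A * Z * (B * Bp) = 0 := by
    rw [show Ap * A * Z * (B * Bp) = Ap * (A * Z * B) * Bp by simp only [Matrix.mul_assoc], hZ,
      Matrix.mul_zero, Matrix.zero_mul]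
  rw [frob_le_frob_iff, frob_add_sq_of_trace_eq_zero
    (trace_conjTranspose_mul_eq_zero_of_sandwich hA2 hB1 hfix hkill)]
  exact le_add_of_nonneg_right (sq_nonneg _)

end LeastSquares

theorem least_squares_AXB_eq_D {m n p q : ℕ} (A : Matrix (Fin m) (Fin n) ℂ)
    (B : Matrix (Fin p) (Fin q) ℂ) (D : Matrix (Fin m) (Fin q) ℂ)
    (Ap : Matrix (Fin n) (Fin m) ℂ) (Bp : Matrix (Fin q) (Fin p) ℂ)
    (hAp : IsMoorePenrose A Ap) (hBp : IsMoorePenrose B Bp) :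
    ({X : Matrix (Fin n) (Fin p) ℂ | ∀ Y : Matrix (Fin n) (Fin p) ℂ, frob (A * X * B - D) ≤ frob (A * Y * B - D)}
      = {X | ∃ V W : Matrix (Fin n) (Fin p) ℂ,
          X = Ap * D * Bp + (1 - Ap * A) * V + W * (1 - B * Bp)}) ∧
    (∀ Y : Matrix (Fin n) (Fin p) ℂ, frob (A * (Ap * D * Bp) * B - D) ≤ frob (A * Y * B - D)) ∧
    (∀ X : Matrix (Fin n) (Fin p) ℂ, (∀ Y : Matrix (Fin n) (Fin p) ℂ, frob (A * X * B - D) ≤ frob (A * Y * B - D)) →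
      frob (Ap * D * Bp) ≤ frob X) := by
  have hLS : ∀ X, IsLeastSquares A B D X ↔ A * (X - Ap * D * Bp) * B = 0 :=
    fun X => isLeastSquares_iff hAp hBp
  have hker := fun Z => mul_mul_eq_zero_iff_of_generalized_inverse (Z := Z) hAp.2.2.1 hBp.2.2.1
  refine ⟨Set.ext fun X => ?_, (hLS _).2 (by simp), fun X hX => ?_⟩
  · exact (hLS X).trans <| (hker _).trans <| exists₂_congr fun V W => by
      rw [add_assoc, sub_eq_iff_eq_add']
  · simpa using frob_le_frob_add_of_mul_mul_eq_zero hAp hBp D ((hLS X).1 hX)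
end

section
/- Let A ∈ ℂ^{m×n} have rank m, and B ∈ ℂ^{s×n}. Then the minimum-norm least squares solution X_LS = BA⁺ of XA = B has entries x_{ij} = det((AA*)_{j.}(b̌_{i.})) / det(AA*), where B̌ = BA* and (AA*)_{j.}(b̌_{i.}) denotes AA* with its j-th row replaced by the i-th row of B̌. -/
open Matrix

/-!
Since `A` has full row rank, `A * Aᴴ` is invertible. The Penrose equations `(A⁺A)ᴴ = A⁺A` and
`AA⁺A = A` give `A⁺ (A Aᴴ) = (A⁺A)ᴴ Aᴴ = (A A⁺ A)ᴴ = Aᴴ`, so `A⁺ = Aᴴ (A Aᴴ)⁻¹` and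
`B A⁺ = (B Aᴴ)(A Aᴴ)⁻¹`. Row `i` of this is the solution `x` of `x (A Aᴴ) = (B Aᴴ)ᵢ`, whose
entries Cramer's rule expresses through the determinants of `A Aᴴ` with one row replaced.
-/

namespace Matrix

theorem isUnit_of_rank_eq_card {n K : Type*} [Fintype n] [DecidableEq n] [Field K]
    (A : Matrix n n K) (h : A.rank = Fintype.card n) : IsUnit A := by
  rw [← mulVec_surjective_iff_isUnit, ← coe_mulVecLin, ← LinearMap.range_eq_top]
  apply Submodule.eq_top_of_finrank_eq
  rw [Module.finrank_fintype_fun_eq_card]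
  exact h

theorem isUnit_det_mul_conjTranspose_self_of_rank_eq_card {m n R : Type*} [Fintype m]
    [DecidableEq m] [Fintype n] [Field R] [PartialOrder R] [StarRing R] [StarOrderedRing R]
    (A : Matrix m n R) (h : A.rank = Fintype.card m) : IsUnit (A * Aᴴ).det :=
  (isUnit_iff_isUnit_det _).mp <|
    isUnit_of_rank_eq_card _ ((rank_self_mul_conjTranspose A).trans h)

theorem mul_mul_conjTranspose_self_eq_conjTranspose {m n R : Type*} [Fintype m] [Fintype n]
    [Semiring R] [StarRing R] {A : Matrix m n R} {X : Matrix n m R}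
    (hXA : (X * A)ᴴ = X * A) (hAXA : A * X * A = A) : X * (A * Aᴴ) = Aᴴ :=
  calc X * (A * Aᴴ) = (X * A)ᴴ * Aᴴ := by rw [hXA, Matrix.mul_assoc]
    _ = (A * X * A)ᴴ := by rw [← conjTranspose_mul, Matrix.mul_assoc]
    _ = Aᴴ := by rw [hAXA]

theorem vecMul_nonsing_inv_apply {n K : Type*} [Fintype n] [DecidableEq n] [Field K]
    {M : Matrix n n K} (hM : IsUnit M.det) (b : n → K) (j : n) :
    (b ᵥ* M⁻¹) j = (M.updateRow j b).det / M.det := by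
  rw [eq_div_iff hM.ne_zero, mul_comm, ← smul_eq_mul, ← Pi.smul_apply,
    det_smul_inv_vecMul_eq_cramer_transpose M b hM, cramer_transpose_apply]

end Matrix

theorem IsMoorePenrose.eq_conjTranspose_mul_inv {m n : ℕ} {A : Matrix (Fin m) (Fin n) ℂ}
    {Ap : Matrix (Fin n) (Fin m) ℂ} (hAp : IsMoorePenrose A Ap) (hA : IsUnit (A * Aᴴ).det) :
    Ap = Aᴴ * (A * Aᴴ)⁻¹ := by
  obtain ⟨-, hApA, hAApA, -⟩ := hAp
  calc Ap = Ap * (A * Aᴴ) * (A * Aᴴ)⁻¹ := (mul_nonsing_inv_cancel_right _ _ hA).symm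
    _ = Aᴴ * (A * Aᴴ)⁻¹ := by rw [mul_mul_conjTranspose_self_eq_conjTranspose hApA hAApA]

theorem cramer_XA_full_rank {m n s : ℕ} (A : Matrix (Fin m) (Fin n) ℂ)
    (hA : A.rank = m) (B : Matrix (Fin s) (Fin n) ℂ)
    (Ap : Matrix (Fin n) (Fin m) ℂ) (hAp : IsMoorePenrose A Ap)
    (i : Fin s) (j : Fin m) :
    (B * Ap) i j =
      ((A * Aᴴ).updateRow j (fun k => (B * Aᴴ) i k)).det / (A * Aᴴ).det := by
  have hAAH : IsUnit (A * Aᴴ).det := open ComplexOrder in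
    isUnit_det_mul_conjTranspose_self_of_rank_eq_card A (hA.trans (Fintype.card_fin m).symm)
  rw [hAp.eq_conjTranspose_mul_inv hAAH, ← Matrix.mul_assoc, mul_apply_eq_vecMul,
    vecMul_nonsing_inv_apply hAAH]
end
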